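/- arXiv:2109.14774 — 2 statements merged into one kernel-verified Lean document; each statement's English description precedes it below -/
import Mathlib

section
/- For any n ≥ 1, there is exactly one alternating permutation π in S_n with ipk(π) = 0. -/
/-!
`π⁻¹` has no peaks iff it is V-shaped, i.e. iff every letter of `π` is either larger or smaller
than all the letters before it; then the first `p` letters of `π` always occupy an interval of
values. In an alternating permutation an ascent must therefore step just above the current
maximum and a descent just below the current minimum, so `π` is the zigzag
`π₁, π₁ + 1, π₁ - 1, π₁ + 2, …`, and its values filling `[n]` forces `π₁ = ⌊(n - 1)/2⌋ + 1`.
-/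

/-- The one-line notation of a permutation `π` of `{1,…,n}`, read as a function on 0-based
positions: `permWord π j = π_{j+1}` (values are 1-based; out-of-range positions give `0`). -/
def permWord {n : ℕ} (π : Equiv.Perm (Fin n)) (j : ℕ) : ℕ :=
  if h : j < n then ((π ⟨j, h⟩ : Fin n) : ℕ) + 1 else 0

/-- `π` contains `σ` as a consecutive pattern: some window of consecutive letters of `π`
has standardization `σ`, i.e. is order-isomorphic to the one-line word of `σ`. -/
def ContainsPat {n m : ℕ} (π : Equiv.Perm (Fin n)) (σ : Equiv.Perm (Fin m)) : Prop :=
  ∃ i : ℕ, i + m ≤ n ∧ ∀ j k : Fin m,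
    (permWord π (i + (j : ℕ)) < permWord π (i + (k : ℕ)) ↔ permWord σ j < permWord σ k)

/-- The number of peaks of `π`: 1-based indices `i` with `2 ≤ i ≤ n-1` and
`π_{i-1} < π_i > π_{i+1}`. -/
def pkCount {n : ℕ} (π : Equiv.Perm (Fin n)) : ℕ :=
  ((Finset.Icc 2 (n - 1)).filter fun i =>
    permWord π (i - 2) < permWord π (i - 1) ∧ permWord π i < permWord π (i - 1)).card

/-- The number of left peaks of `π`: 1-based indices `i ∈ [n-1]` that are peaks,
or `i = 1` with `π_1 > π_2`. -/
def lpkCount {n : ℕ} (π : Equiv.Perm (Fin n)) : ℕ :=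
  ((Finset.Icc 1 (n - 1)).filter fun i =>
    (2 ≤ i ∧ permWord π (i - 2) < permWord π (i - 1) ∧ permWord π i < permWord π (i - 1))
      ∨ (i = 1 ∧ permWord π 1 < permWord π 0)).card

/-- The number of peaks of `π⁻¹`. -/
def ipk {n : ℕ} (π : Equiv.Perm (Fin n)) : ℕ := pkCount π⁻¹

/-- The number of left peaks of `π⁻¹`. -/
def ilpk {n : ℕ} (π : Equiv.Perm (Fin n)) : ℕ := lpkCount π⁻¹

/-- `π` is alternating: `π_1 < π_2 > π_3 < π_4 > ⋯`, i.e. for each 1-based `i ∈ [n-1]`,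
`π_i < π_{i+1}` if `i` is odd and `π_i > π_{i+1}` if `i` is even. -/
def Alternating {n : ℕ} (π : Equiv.Perm (Fin n)) : Prop :=
  ∀ i : ℕ, 1 ≤ i → i ≤ n - 1 →
    if i % 2 = 1 then permWord π (i - 1) < permWord π i
    else permWord π i < permWord π (i - 1)

section permWord

variable {n : ℕ} (π : Equiv.Perm (Fin n))

theorem permWord_of_lt {j : ℕ} (hj : j < n) : permWord π j = π ⟨j, hj⟩ + 1 := dif_pos hj

theorem permWord_pos {j : ℕ} (hj : j < n) : 0 < permWord π j := by
  rw [permWord_of_lt π hj]; omega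

theorem permWord_le (j : ℕ) : permWord π j ≤ n := by
  unfold permWord; split_ifs <;> omega

theorem permWord_injOn : Set.InjOn (permWord π) (Set.Iio n) := by
  intro a ha b hb h
  rw [permWord_of_lt π ha, permWord_of_lt π hb, Nat.add_right_cancel_iff, Fin.val_inj,
    π.apply_eq_iff_eq] at h
  exact congrArg Fin.val h

theorem permWord_inv_eq_iff {a u : ℕ} (ha : a < n) (hu : u < n) :
    permWord π⁻¹ u = a + 1 ↔ permWord π a = u + 1 := by
  rw [permWord_of_lt π ha, permWord_of_lt π⁻¹ hu, Nat.add_right_cancel_iff,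
    Nat.add_right_cancel_iff]
  simpa [Fin.ext_iff, eq_comm (a := u)] using
    (Equiv.Perm.inv_eq_iff_eq (f := π) (x := ⟨u, hu⟩) (y := ⟨a, ha⟩))

theorem exists_permWord_eq {v : ℕ} (hv : 0 < v) (hvn : v ≤ n) : ∃ r < n, permWord π r = v := by
  obtain ⟨u, rfl⟩ : ∃ u, v = u + 1 := ⟨v - 1, by omega⟩
  refine ⟨permWord π⁻¹ u - 1, by have := permWord_le π⁻¹ u; omega, ?_⟩
  have hpos := permWord_pos π⁻¹ (show u < n by omega)
  rw [← permWord_inv_eq_iff π (by have := permWord_le π⁻¹ u; omega) (by omega)]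
  omega

theorem pkCount_eq_zero_iff : pkCount π = 0 ↔ ∀ j, j + 2 < n →
    ¬ (permWord π j < permWord π (j + 1) ∧ permWord π (j + 2) < permWord π (j + 1)) := by
  rw [pkCount, Finset.card_eq_zero, Finset.filter_eq_empty_iff]
  constructor
  · intro h j hj
    simpa using h (x := j + 2) (Finset.mem_Icc.2 ⟨by omega, by omega⟩)
  · intro h i hi
    obtain ⟨j, rfl⟩ : ∃ j, i = j + 2 := ⟨i - 2, by have := (Finset.mem_Icc.1 hi).1; omega⟩
    simpa using h j (by have := (Finset.mem_Icc.1 hi).2; omega)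

end permWord

theorem lt_or_lt_of_forall_not_peak {n : ℕ} {w : ℕ → ℕ} (hw : Set.InjOn w (Set.Iio n))
    (hpk : ∀ j, j + 2 < n → ¬ (w j < w (j + 1) ∧ w (j + 2) < w (j + 1)))
    {a b c : ℕ} (hab : a < b) (hbc : b < c) (hcn : c < n) : w b < w a ∨ w b < w c := by
  have hlt_of_le : ∀ x y, x < n → y < n → x ≠ y → w x ≤ w y → w x < w y := fun x y hx hy hxy h =>
    lt_of_le_of_ne h fun h' => hxy (hw (Set.mem_Iio.2 hx) (Set.mem_Iio.2 hy) h')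
  by_contra! h
  have hab' := hlt_of_le a b (by omega) (by omega) (by omega) h.1
  have hcb' := hlt_of_le c b (by omega) (by omega) (by omega) h.2
  -- the maximum of `w` on `[a, c]` sits strictly inside, hence is a peak
  obtain ⟨m, hm, hmax⟩ := (Finset.Icc a c).exists_max_image w ⟨a, by simp; omega⟩
  rw [Finset.mem_Icc] at hm
  have hbm := hmax b (by simp; omega)
  have ham : a ≠ m := by rintro rfl; omega
  have hmc : m ≠ c := by rintro rfl; omega
  obtain ⟨j, rfl⟩ : ∃ j, m = j + 1 := ⟨m - 1, by omega⟩
  exact hpk j (by omega)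
    ⟨hlt_of_le _ _ (by omega) (by omega) (by omega) (hmax j (by simp; omega)),
      hlt_of_le _ _ (by omega) (by omega) (by omega) (hmax (j + 2) (by simp; omega))⟩

/-- If `π⁻¹` has no peaks, every letter of `π` is a left-to-right maximum or minimum. -/
theorem not_between_of_ipk_eq_zero {n : ℕ} {π : Equiv.Perm (Fin n)} (h : ipk π = 0)
    {a c r : ℕ} (har : a < r) (hcr : c < r) (hrn : r < n) :
    ¬ (permWord π a < permWord π r ∧ permWord π r < permWord π c) := by
  rintro ⟨hltr, hrlt⟩
  have hinv : ∀ x < n, permWord π⁻¹ (permWord π x - 1) = x + 1 := fun x hx => by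
    have := permWord_pos π hx
    exact (permWord_inv_eq_iff π hx (by have := permWord_le π x; omega)).2 (by omega)
  have := permWord_pos π (show a < n by omega)
  have := lt_or_lt_of_forall_not_peak (permWord_injOn π⁻¹) ((pkCount_eq_zero_iff π⁻¹).1 h)
    (a := permWord π a - 1) (b := permWord π r - 1) (c := permWord π c - 1)
    (by omega) (by omega) (by have := permWord_le π c; omega)
  rw [hinv a (by omega), hinv r hrn, hinv c (by omega)] at this
  omega

/-- `W p = W 0 - p / 2` for even `p` and `W p = W 0 + (p + 1) / 2` for odd `p`, stated without
truncated subtraction. -/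
def IsZigzagAt (W : ℕ → ℕ) (p : ℕ) : Prop :=
  (p % 2 = 0 → W p + p / 2 = W 0) ∧ (p % 2 = 1 → W p = W 0 + (p + 1) / 2)

section zigzag

variable {n : ℕ} {π : Equiv.Perm (Fin n)}

theorem permWord_odd_of_isZigzagAt (halt : Alternating π) (hipk : ipk π = 0) {k : ℕ}
    (hkn : 2 * k + 1 < n) (hprev : ∀ q < 2 * k + 1, IsZigzagAt (permWord π) q) :
    permWord π (2 * k + 1) = permWord π 0 + (k + 1) := by
  have hmin : permWord π (2 * k) + k = permWord π 0 := by
    have := hprev (2 * k) (by omega); unfold IsZigzagAt at this; omega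
  have hmax : permWord π (2 * k - 1) = permWord π 0 + k := by
    have := hprev (2 * k - 1) (by omega); unfold IsZigzagAt at this; omega
  have hasc : permWord π (2 * k) < permWord π (2 * k + 1) := by
    have := halt (2 * k + 1) (by omega) (by omega)
    rwa [if_pos (by omega), Nat.add_sub_cancel] at this
  have hne : permWord π (2 * k + 1) ≠ permWord π (2 * k - 1) := fun h =>
    absurd (permWord_injOn π (Set.mem_Iio.2 hkn) (Set.mem_Iio.2 (by omega)) h) (by omega)
  have hlow : permWord π 0 + k < permWord π (2 * k + 1) := by
    by_contra
    exact not_between_of_ipk_eq_zero hipk (a := 2 * k) (c := 2 * k - 1) (by omega) (by omega) hkn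
      ⟨hasc, by omega⟩
  have hup : ¬ permWord π 0 + k + 1 < permWord π (2 * k + 1) := by
    intro hgt
    obtain ⟨r, hrn, hr⟩ := exists_permWord_eq π (v := permWord π 0 + k + 1) (by omega)
      (by have := permWord_le π (2 * k + 1); omega)
    rcases lt_trichotomy r (2 * k + 1) with hr' | rfl | hr'
    · have := hprev r hr'; unfold IsZigzagAt at this; omega
    · omega
    · exact not_between_of_ipk_eq_zero hipk (a := 0) (c := 2 * k + 1) (by omega) hr' hrn
        ⟨by omega, by omega⟩
  omega

theorem permWord_even_of_isZigzagAt (halt : Alternating π) (hipk : ipk π = 0) {k : ℕ}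
    (hkn : 2 * k + 2 < n) (hprev : ∀ q < 2 * k + 2, IsZigzagAt (permWord π) q) :
    permWord π (2 * k + 2) + (k + 1) = permWord π 0 := by
  have hmin : permWord π (2 * k) + k = permWord π 0 := by
    have := hprev (2 * k) (by omega); unfold IsZigzagAt at this; omega
  have hmax : permWord π (2 * k + 1) = permWord π 0 + (k + 1) := by
    have := hprev (2 * k + 1) (by omega); unfold IsZigzagAt at this; omega
  have hdesc : permWord π (2 * k + 2) < permWord π (2 * k + 1) := by
    have := halt (2 * k + 2) (by omega) (by omega)
    rwa [if_neg (by omega), show 2 * k + 2 - 1 = 2 * k + 1 by omega] at this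
  have hne : permWord π (2 * k + 2) ≠ permWord π (2 * k) := fun h =>
    absurd (permWord_injOn π (Set.mem_Iio.2 hkn) (Set.mem_Iio.2 (by omega)) h) (by omega)
  have hup : permWord π (2 * k + 2) + k < permWord π 0 := by
    by_contra
    exact not_between_of_ipk_eq_zero hipk (a := 2 * k) (c := 2 * k + 1) (by omega) (by omega) hkn
      ⟨by omega, hdesc⟩
  have hlow : ¬ permWord π (2 * k + 2) + (k + 1) < permWord π 0 := by
    intro hlt
    obtain ⟨r, hrn, hr⟩ := exists_permWord_eq π (v := permWord π 0 - (k + 1)) (by omega)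
      (by have := permWord_le π 0; omega)
    rcases lt_trichotomy r (2 * k + 2) with hr' | rfl | hr'
    · have := hprev r hr'; unfold IsZigzagAt at this; omega
    · omega
    · exact not_between_of_ipk_eq_zero hipk (a := 2 * k + 2) (c := 0) hr' (by omega) hrn
        ⟨by omega, by omega⟩
  omega

theorem isZigzagAt_of_alternating_of_ipk_eq_zero (halt : Alternating π) (hipk : ipk π = 0) :
    ∀ p < n, IsZigzagAt (permWord π) p := by
  intro p
  induction p using Nat.strong_induction_on with
  | _ p IH =>
    intro hpn
    have IH' : ∀ q < p, IsZigzagAt (permWord π) q := fun q hq => IH q hq (by omega)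
    obtain ⟨k, rfl | rfl | rfl⟩ : ∃ k, p = 0 ∨ p = 2 * k + 1 ∨ p = 2 * k + 2 :=
      ⟨(p - 1) / 2, by omega⟩
    · simp [IsZigzagAt]
    · have := permWord_odd_of_isZigzagAt halt hipk hpn IH'
      constructor <;> omega
    · have := permWord_even_of_isZigzagAt halt hipk hpn IH'
      constructor <;> omega

theorem permWord_zero_of_isZigzagAt (hn : 0 < n) (hzz : ∀ p < n, IsZigzagAt (permWord π) p) :
    permWord π 0 = (n - 1) / 2 + 1 := by
  -- the zigzag reaches its least value at position `2 ⌊(n-1)/2⌋` and its largest at `2 ⌊n/2⌋ - 1`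
  have hlo := hzz (2 * ((n - 1) / 2)) (by omega)
  have hhi := hzz (2 * (n / 2) - 1) (by omega)
  unfold IsZigzagAt at hlo hhi
  have := permWord_pos π (show 2 * ((n - 1) / 2) < n by omega)
  have := permWord_le π (2 * (n / 2) - 1)
  have := permWord_le π 0
  omega

end zigzag

/-- The permutation `m+1, m+2, m, m+3, m-1, …` (one-line notation, `m = ⌊(n-1)/2⌋`),
e.g. `3 4 2 5 1` for `n = 5`. -/
def zigzagPerm (n : ℕ) : Equiv.Perm (Fin n) where
  toFun p := ⟨if p.1 % 2 = 0 then (n - 1) / 2 - p.1 / 2 else (n - 1) / 2 + (p.1 + 1) / 2,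
    by have := p.2; split <;> omega⟩
  invFun v := ⟨if v.1 ≤ (n - 1) / 2 then 2 * ((n - 1) / 2 - v.1) else 2 * (v.1 - (n - 1) / 2) - 1,
    by have := v.2; split <;> omega⟩
  left_inv p := by have := p.2; ext; simp only; split_ifs <;> omega
  right_inv v := by have := v.2; ext; simp only; split_ifs <;> omega

theorem zigzagPerm_apply (n : ℕ) (p : Fin n) : (zigzagPerm n p : ℕ) =
    if p.1 % 2 = 0 then (n - 1) / 2 - p.1 / 2 else (n - 1) / 2 + (p.1 + 1) / 2 := rfl

theorem zigzagPerm_inv_apply (n : ℕ) (v : Fin n) : ((zigzagPerm n)⁻¹ v : ℕ) =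
    if v.1 ≤ (n - 1) / 2 then 2 * ((n - 1) / 2 - v.1) else 2 * (v.1 - (n - 1) / 2) - 1 := rfl

theorem alternating_zigzagPerm (n : ℕ) : Alternating (zigzagPerm n) := by
  intro i hi hin
  rw [permWord_of_lt _ (show i < n by omega), permWord_of_lt _ (show i - 1 < n by omega),
    zigzagPerm_apply, zigzagPerm_apply]
  dsimp only
  split_ifs <;> omega

theorem ipk_zigzagPerm (n : ℕ) : ipk (zigzagPerm n) = 0 := by
  rw [ipk, pkCount_eq_zero_iff]
  intro j hj
  rw [permWord_of_lt _ (show j < n by omega), permWord_of_lt _ (show j + 1 < n by omega),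
    permWord_of_lt _ hj, zigzagPerm_inv_apply, zigzagPerm_inv_apply, zigzagPerm_inv_apply]
  dsimp only
  split_ifs <;> omega

theorem eq_zigzagPerm_of_alternating_of_ipk_eq_zero {n : ℕ} {π : Equiv.Perm (Fin n)}
    (halt : Alternating π) (hipk : ipk π = 0) : π = zigzagPerm n := by
  have hzz := isZigzagAt_of_alternating_of_ipk_eq_zero halt hipk
  ext x
  have hn : 0 < n := x.pos
  have h0 := permWord_zero_of_isZigzagAt hn hzz
  have hx := hzz x x.2
  unfold IsZigzagAt at hx
  rw [permWord_of_lt π x.2, Fin.eta, h0] at hx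
  rw [zigzagPerm_apply]
  split_ifs <;> omega

theorem stmt4_general (n : ℕ) :
    ∃! π : Equiv.Perm (Fin n), Alternating π ∧ ipk π = 0 :=
  ⟨zigzagPerm n, ⟨alternating_zigzagPerm n, ipk_zigzagPerm n⟩,
    fun _ h => eq_zigzagPerm_of_alternating_of_ipk_eq_zero h.1 h.2⟩

/-- For any `n ≥ 1`, there is exactly one alternating permutation in `S_n`
whose inverse has no peaks. -/
theorem stmt4 (n : ℕ) (hn : 1 ≤ n) :
    ∃! π : Equiv.Perm (Fin n), Alternating π ∧ ipk π = 0 :=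
  stmt4_general n
end

section
/- For any n ≥ 1 and k ≥ 0, the number of permutations π in S_n with des(π) = k and ipk(π) = 0 is equal to the binomial coefficient C(n−1, k). -/
/-- The number of descents of `π`: 1-based indices `i ∈ [n-1]` with `π_i > π_{i+1}`. -/
def desCount {n : ℕ} (π : Equiv.Perm (Fin n)) : ℕ :=
  ((Finset.Icc 1 (n - 1)).filter fun i => permWord π i < permWord π (i - 1)).card


/-! A permutation `σ` has no peaks iff it has no pattern `σ p < σ q > σ r` with `p < q < r` at
all, since a maximum of `σ` on `[p, r]` would be a peak. For `σ = π⁻¹` this says: all values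
below `b` lie on one side of `b` in the word `π⁻¹`, so that word is built by writing
`0, 1, …, n - 1` in turn at its left or right end, and the value `b ≥ 1` goes to the left
exactly when `b` is a descent of `π`. Hence `π ↦ Des π` is a bijection from the permutations
with `ipk π = 0` onto the subsets of `{1, …, n - 1}`, and those with `des π = k` correspond to
the `k`-subsets. -/

open Equiv Finset

theorem Equiv.Perm.eq_of_lt_iff_lt {α : Type*} [LinearOrder α] [Finite α] {π π' : Perm α}
    (h : ∀ a b, π a < π b ↔ π' a < π' b) : π = π' := by
  have hmono : StrictMono (π' ∘ π.symm) := fun x y hxy => by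
    simpa only [Function.comp_apply, ← h, Equiv.apply_symm_apply] using hxy
  ext a
  simpa using (congrFun hmono.eq_id (π a)).symm

section

variable {n : ℕ}

theorem permWord_lt_permWord_iff (π : Perm (Fin n)) {i j : ℕ} (hi : i < n) (hj : j < n) :
    permWord π i < permWord π j ↔ π ⟨i, hi⟩ < π ⟨j, hj⟩ := by
  simp only [permWord, dif_pos hi, dif_pos hj, add_lt_add_iff_right, Fin.lt_def]

theorem pkCount_eq_zero_iff_s6 {σ : Perm (Fin n)} :
    pkCount σ = 0 ↔ ∀ p q r : Fin n, p < q → q < r → σ p < σ q → σ q < σ r := by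
  rw [pkCount, card_eq_zero, filter_eq_empty_iff]
  constructor
  · intro h p q r hpq hqr hpq'
    by_contra hqr'
    have hrq : σ r < σ q := lt_of_le_of_ne (not_lt.1 hqr') (σ.injective.ne hqr.ne')
    obtain ⟨m, hm, hmax⟩ := (Icc p r).exists_max_image σ ⟨q, mem_Icc.2 ⟨hpq.le, hqr.le⟩⟩
    have hqm := hmax q (mem_Icc.2 ⟨hpq.le, hqr.le⟩)
    obtain ⟨hpm, hmr⟩ := mem_Icc.1 hm
    have hpm : p < m := lt_of_le_of_ne hpm (by rintro rfl; exact absurd hqm (not_le.2 hpq'))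
    have hmr : m < r := lt_of_le_of_ne hmr (by rintro rfl; exact absurd hqm (not_le.2 hrq))
    rw [Fin.lt_def] at hpm hmr
    have hrn := r.isLt
    have hpeak (x : ℕ) (hx : x < n) (hpx : (p : ℕ) ≤ x) (hxr : x ≤ r) (hxm : x ≠ m) :
        σ ⟨x, hx⟩ < σ m :=
      lt_of_le_of_ne (hmax _ (mem_Icc.2 ⟨Fin.le_def.2 hpx, Fin.le_def.2 hxr⟩))
        (σ.injective.ne (Fin.ne_of_val_ne hxm))
    apply h (x := (m : ℕ) + 1) (mem_Icc.2 ⟨by omega, by omega⟩)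
    rw [show (m : ℕ) + 1 - 2 = m - 1 by omega, Nat.add_sub_cancel,
      permWord_lt_permWord_iff σ (by omega) m.isLt, permWord_lt_permWord_iff σ (by omega) m.isLt]
    exact ⟨hpeak (m - 1) _ (by omega) (by omega) (by omega),
      hpeak (m + 1) _ (by omega) (by omega) (by omega)⟩
  · rintro h i hi ⟨h₁, h₂⟩
    obtain ⟨hi₂, hin⟩ := mem_Icc.1 hi
    rw [permWord_lt_permWord_iff σ (by omega) (by omega)] at h₁
    rw [permWord_lt_permWord_iff σ (by omega) (by omega)] at h₂
    exact (h _ _ _ (Fin.mk_lt_mk.2 (by omega)) (Fin.mk_lt_mk.2 (by omega)) h₁).asymm h₂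

def descentSet (π : Perm (Fin n)) : Finset ℕ :=
  (Icc 1 (n - 1)).filter fun i => permWord π i < permWord π (i - 1)

theorem card_descentSet (π : Perm (Fin n)) : #(descentSet π) = desCount π := rfl

/-- Read as the map value ↦ position, `π` arises by writing `0, 1, …, n - 1` in turn at the
left end (values in `S`) or at the right end (values not in `S`) of the word `π⁻¹`. -/
def IsEndInsertion (π : Perm (Fin n)) (S : Finset ℕ) : Prop :=
  ∀ a b : Fin n, a < b → (π a < π b ↔ (b : ℕ) ∉ S)

variable {π π' : Perm (Fin n)} {S : Finset ℕ}

theorem IsEndInsertion.eq (h : IsEndInsertion π S) (h' : IsEndInsertion π' S) : π = π' := by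
  refine Perm.eq_of_lt_iff_lt fun a b => ?_
  rcases lt_trichotomy a b with hab | rfl | hba
  · rw [h a b hab, h' a b hab]
  · simp
  · have hswap (σ : Perm (Fin n)) : σ a < σ b ↔ ¬σ b < σ a := by
      rw [← (σ.injective.ne hba.ne').le_iff_lt, not_lt]
    rw [hswap π, hswap π', h b a hba, h' b a hba]

theorem IsEndInsertion.descentSet_eq (h : IsEndInsertion π S) (hS : S ⊆ Icc 1 (n - 1)) :
    descentSet π = S := by
  ext i
  rw [descentSet, mem_filter]
  constructor
  · rintro ⟨hi, hdes⟩
    obtain ⟨hi₁, hin⟩ := mem_Icc.1 hi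
    rw [permWord_lt_permWord_iff π (by omega) (by omega)] at hdes
    by_contra hiS
    exact hdes.asymm ((h ⟨i - 1, by omega⟩ ⟨i, by omega⟩ (Fin.mk_lt_mk.2 (by omega))).2 hiS)
  · intro hiS
    obtain ⟨hi₁, hin⟩ := mem_Icc.1 (hS hiS)
    refine ⟨hS hiS, ?_⟩
    rw [permWord_lt_permWord_iff π (by omega) (by omega), ← not_le,
      (π.injective.ne (Fin.ne_of_val_ne (by simp; omega))).le_iff_lt,
      h _ _ (Fin.mk_lt_mk.2 (by omega)), not_not]
    exact hiS

theorem apply_lt_of_pkCount_inv_eq_zero (h : pkCount π⁻¹ = 0) {a b c : Fin n}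
    (hab : a < b) (hcb : c < b) (ha : π a < π b) : π c < π b := by
  by_contra hc
  have hbc : π b < π c := lt_of_le_of_ne (not_lt.1 hc) (π.injective.ne hcb.ne')
  have hbc' : b < c := by simpa using pkCount_eq_zero_iff_s6.1 h (π a) (π b) (π c) ha hbc (by simpa)
  exact hbc'.asymm hcb

theorem isEndInsertion_descentSet (h : pkCount π⁻¹ = 0) :
    IsEndInsertion π (descentSet π) := by
  intro a b hab
  have hb : 1 ≤ (b : ℕ) := by rw [Fin.lt_def] at hab; omega
  have hcb : (⟨b - 1, by omega⟩ : Fin n) < b := Fin.lt_def.2 (by simp; omega)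
  have hdes : (b : ℕ) ∈ descentSet π ↔ π b < π ⟨b - 1, by omega⟩ := by
    rw [descentSet, mem_filter, permWord_lt_permWord_iff π b.isLt (by omega), Fin.eta,
      and_iff_right (mem_Icc.2 ⟨hb, by omega⟩)]
  rw [hdes, not_lt, (π.injective.ne hcb.ne).le_iff_lt]
  exact ⟨apply_lt_of_pkCount_inv_eq_zero h hab hcb, apply_lt_of_pkCount_inv_eq_zero h hcb hab⟩

theorem IsEndInsertion.pkCount_inv_eq_zero (h : IsEndInsertion π S) : pkCount π⁻¹ = 0 := by
  refine pkCount_eq_zero_iff_s6.2 fun p q r hpq hqr hpq' => ?_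
  have hq : (π⁻¹ q : ℕ) ∉ S := (h _ _ hpq').1 (by simpa using hpq)
  by_contra hrq
  have hrq : π⁻¹ r < π⁻¹ q := lt_of_le_of_ne (not_lt.1 hrq) (π⁻¹.injective.ne hqr.ne')
  exact hqr.asymm (by simpa using (h _ _ hrq).2 hq)

end

/-- The position of the value `i` in the end insertion coded by `S`: the values of `S` above `i`
stand to its left, and so do all `i` smaller values unless `i ∈ S`. -/
def endInsertionPos (n : ℕ) (S : Finset ℕ) (i : ℕ) : ℕ :=
  #(S ∩ Ioo i n) + if i ∈ S then 0 else i

section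

variable {n : ℕ} {S : Finset ℕ} {i j : ℕ}

theorem endInsertionPos_lt (hi : i < n) : endInsertionPos n S i < n := by
  have : #(S ∩ Ioo i n) ≤ n - i - 1 := (card_le_card inter_subset_right).trans (Nat.card_Ioo i n).le
  unfold endInsertionPos
  split_ifs <;> omega

theorem endInsertionPos_lt_of_mem (hij : i < j) (hjn : j < n) (hj : j ∈ S) :
    endInsertionPos n S j < endInsertionPos n S i := by
  have : #(S ∩ Ioo j n) < #(S ∩ Ioo i n) := by
    refine card_lt_card ((ssubset_iff_of_subset fun x hx => ?_).2 ⟨j, ?_, ?_⟩)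
    · simp only [mem_inter, mem_Ioo] at hx ⊢
      exact ⟨hx.1, by omega, hx.2.2⟩
    · simp [hj, hij, hjn]
    · simp
  unfold endInsertionPos
  rw [if_pos hj]
  split_ifs <;> omega

theorem endInsertionPos_lt_of_not_mem (hij : i < j) (hj : j ∉ S) :
    endInsertionPos n S i < endInsertionPos n S j := by
  have : #(S ∩ Ioo i n) ≤ #(S ∩ Ioo j n) + (j - i - 1) := by
    calc #(S ∩ Ioo i n) ≤ #(S ∩ Ioo j n ∪ Ioo i j) := card_le_card fun x hx => by
          simp only [mem_union, mem_inter, mem_Ioo] at hx ⊢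
          rcases lt_or_gt_of_ne fun e : x = j => hj (e ▸ hx.1) with hxj | hxj
          exacts [Or.inr ⟨hx.2.1, hxj⟩, Or.inl ⟨hx.1, hxj, hx.2.2⟩]
      _ ≤ _ := (card_union_le _ _).trans (by rw [Nat.card_Ioo])
  unfold endInsertionPos
  rw [if_neg hj]
  split_ifs <;> omega

theorem endInsertionPos_ne (hij : i < j) (hjn : j < n) :
    endInsertionPos n S i ≠ endInsertionPos n S j := by
  by_cases hj : j ∈ S
  · exact (endInsertionPos_lt_of_mem hij hjn hj).ne'
  · exact (endInsertionPos_lt_of_not_mem hij hj).ne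

theorem exists_isEndInsertion : ∃ π : Perm (Fin n), IsEndInsertion π S := by
  let f : Fin n → Fin n := fun i => ⟨endInsertionPos n S i, endInsertionPos_lt i.isLt⟩
  have hf : f.Injective := by
    intro a b hab
    by_contra hne
    rcases lt_or_gt_of_ne hne with h | h
    · exact endInsertionPos_ne h b.isLt (congrArg Fin.val hab)
    · exact endInsertionPos_ne h a.isLt (congrArg Fin.val hab).symm
  refine ⟨Equiv.ofBijective f (Finite.injective_iff_bijective.1 hf), fun a b hab => ?_⟩
  simp only [Equiv.ofBijective_apply, f, Fin.mk_lt_mk]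
  by_cases hb : (b : ℕ) ∈ S
  · simpa [hb] using (endInsertionPos_lt_of_mem hab b.isLt hb).le
  · simpa [hb] using endInsertionPos_lt_of_not_mem hab hb

theorem eq_of_descentSet_eq {π π' : Perm (Fin n)} (hπ : ipk π = 0) (hπ' : ipk π' = 0)
    (h : descentSet π = descentSet π') : π = π' :=
  (isEndInsertion_descentSet hπ).eq (h ▸ isEndInsertion_descentSet hπ')

theorem exists_ipk_eq_zero_descentSet_eq (hS : S ⊆ Icc 1 (n - 1)) :
    ∃ π : Perm (Fin n), ipk π = 0 ∧ descentSet π = S :=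
  let ⟨π, h⟩ := exists_isEndInsertion (n := n) (S := S)
  ⟨π, h.pkCount_inv_eq_zero, h.descentSet_eq hS⟩

end

theorem stmt6_general (n k : ℕ) :
    Nat.card {π : Equiv.Perm (Fin n) // desCount π = k ∧ ipk π = 0}
      = Nat.choose (n - 1) k := by
  let f : {π : Perm (Fin n) // desCount π = k ∧ ipk π = 0} → powersetCard k (Icc 1 (n - 1)) :=
    fun π => ⟨descentSet π, mem_powersetCard.2 ⟨filter_subset _ _, (card_descentSet _).trans π.2.1⟩⟩
  have hf : f.Bijective := by
    refine ⟨fun π π' h => Subtype.ext (eq_of_descentSet_eq π.2.2 π'.2.2 (congrArg Subtype.val h)),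
      fun S => ?_⟩
    obtain ⟨hS, hk⟩ := mem_powersetCard.1 S.2
    obtain ⟨π, hπ, hD⟩ := exists_ipk_eq_zero_descentSet_eq hS
    exact ⟨⟨π, by rw [← card_descentSet, hD, hk], hπ⟩, Subtype.ext hD⟩
  rw [Nat.card_eq_of_bijective f hf, Nat.card_eq_finsetCard, card_powersetCard, Nat.card_Icc,
    Nat.add_sub_cancel]

/-- For any `n ≥ 1` and `k ≥ 0`, the number of permutations `π ∈ S_n` with `des(π) = k`
whose inverse has no peaks is the binomial coefficient `C(n-1, k)`. -/
theorem stmt6 (n k : ℕ) (hn : 1 ≤ n) :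
    Nat.card {π : Equiv.Perm (Fin n) // desCount π = k ∧ ipk π = 0}
      = Nat.choose (n - 1) k :=
  stmt6_general n k
end
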